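/- (Type D_n, parts (v) and (vi) of the proposition on fundamental weights.) (a) If n ≥ 4 and n ≠ 5, then the minimum over k ∈ {1, …, n} of ℓ_{ϖ_n}⁻(ϖ_k) equals n − 1 and is attained at k = 1, realized by the composition w = s_n ∘ s_{n−2} ∘ s_{n−3} ∘ ⋯ ∘ s₁ (with s₁ applied first), which sends e₁ to −e_n. (b) If n = 5, then the minimum over k ∈ {1, …, 5} of ℓ_{ϖ₅}⁻(ϖ_k) equals 3 and is attained at k = 4: ℓ_{ϖ₅}⁻(ϖ₄) = 3, realized by w = s₅ ∘ s₃ ∘ s₄ (with s₄ applied first). -/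

import Mathlib

open scoped RealInnerProductSpace

/-- The `j`-th simple reflection of type `Dₙ` (`1 ≤ j ≤ n`), acting on `ℝⁿ`:
for `j < n` it transposes the coordinates numbered `j` and `j+1` (in `1`-based numbering),
and for `j = n` it sends `e_{n−1}` to `−eₙ` and `eₙ` to `−e_{n−1}`. -/
noncomputable def sD (n j : ℕ) : EuclideanSpace ℝ (Fin n) → EuclideanSpace ℝ (Fin n) :=
  fun v => WithLp.toLp 2 fun i =>
    if j = n then
      (if (i : ℕ) + 2 = n then -(v ⟨(n - 1) % n, Nat.mod_lt _ i.pos⟩)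
       else if (i : ℕ) + 1 = n then -(v ⟨(n - 2) % n, Nat.mod_lt _ i.pos⟩)
       else v i)
    else if (i : ℕ) + 1 = j then v ⟨j % n, Nat.mod_lt _ i.pos⟩
    else if (i : ℕ) = j then v ⟨(j - 1) % n, Nat.mod_lt _ i.pos⟩
    else v i

/-- The composition of the simple reflections indexed by the entries of `l`
(the last entry of the list is applied first). -/
noncomputable def compD (n : ℕ) (l : List ℕ) :
    EuclideanSpace ℝ (Fin n) → EuclideanSpace ℝ (Fin n) :=
  l.foldr (fun j g => sD n j ∘ g) id

/-- The fundamental weights of type `Dₙ` (`1 ≤ j ≤ n`): `ϖⱼ = e₁ + ⋯ + eⱼ` for `j ≤ n−2`,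
`ϖ_{n−1} = (e₁ + ⋯ + e_{n−1} − eₙ)/2` and `ϖₙ = (e₁ + ⋯ + e_{n−1} + eₙ)/2`. -/
noncomputable def wtD (n j : ℕ) : EuclideanSpace ℝ (Fin n) :=
  if j + 1 = n then WithLp.toLp 2 (fun i => if (i : ℕ) + 1 = n then -(1 / 2 : ℝ) else 1 / 2)
  else if j = n then WithLp.toLp 2 (fun _ => (1 / 2 : ℝ))
  else WithLp.toLp 2 fun i => if (i : ℕ) < j then 1 else 0

/-- The vector `−eₙ`. -/
noncomputable def negEnD (n : ℕ) : EuclideanSpace ℝ (Fin n) :=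
  WithLp.toLp 2 fun i => if (i : ℕ) + 1 = n then -1 else 0

/-!
Let `ρ = (n-1, …, 1, 0)` and, for `x ∈ ℝⁿ`, let `height x` be the sum of `ρᵢ` over the negative
coordinates `xᵢ`; on vectors with coordinates `±1/2` it is `⟨ϖₙ - x, ρ⟩`. A simple reflection is a
signed transposition of two adjacent coordinates, so it raises the height by at most one. As the
reflections are self-adjoint, `⟨w ϖₖ, ϖₙ⟩ = ⟨ϖₖ, x⟩` with `x = w⁻¹ ϖₙ`, a vector with coordinates
`±1/2` and height at most `ℓ(w)`. If `⟨ϖₖ, x⟩ < 0` and `k ≤ n-2`, more than `k/2` of `x₁, …, xₖ`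
are negative, each of weight at least `n-k`, so the height is at least `(n-k)(k+1)/2 ≥ n-1`. If
`k ≥ n-1`, at least `m = ⌊n/2⌋` of `x₁, …, x_{n-1}` are negative, with distinct positive weights,
so the height is at least `m(m+1)/2`, which is `≥ n-1` except for `n = 5`, where it is `3`.
-/
open Finset

section

variable {n : ℕ}

def signedSwap (a b : Fin n) (ε : ℝ) (v : EuclideanSpace ℝ (Fin n)) :
    EuclideanSpace ℝ (Fin n) :=
  WithLp.toLp 2 fun i => if i = a then ε * v b else if i = b then ε * v a else v i

lemma sD_eq_signedSwap_of_lt {j : ℕ} (hj : 1 ≤ j) (hjn : j < n) :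
    sD n j = signedSwap ⟨j - 1, by omega⟩ ⟨j, hjn⟩ 1 := by
  funext v
  ext i
  have hj' : j % n = j := Nat.mod_eq_of_lt hjn
  have hj'' : (j - 1) % n = j - 1 := Nat.mod_eq_of_lt (by omega)
  simp only [sD, signedSwap, Fin.ext_iff, hj', hj'', one_mul]
  split_ifs <;> first | omega | rfl

lemma sD_self_eq_signedSwap (hn : 2 ≤ n) :
    sD n n = signedSwap ⟨n - 2, by omega⟩ ⟨n - 1, by omega⟩ (-1) := by
  funext v
  ext i
  have h1 : (n - 1) % n = n - 1 := Nat.mod_eq_of_lt (by omega)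
  have h2 : (n - 2) % n = n - 2 := Nat.mod_eq_of_lt (by omega)
  simp only [sD, signedSwap, Fin.ext_iff, h1, h2, neg_one_mul]
  split_ifs <;> first | omega | rfl

lemma sum_sub_sum_of_eq_off_pair {ι M : Type*} [Fintype ι] [DecidableEq ι] [AddCommGroup M]
    {f g : ι → M} {a b : ι} (hab : a ≠ b) (h : ∀ i, i ≠ a → i ≠ b → f i = g i) :
    ∑ i, f i - ∑ i, g i = (f a - g a) + (f b - g b) := by
  rw [← Finset.sum_sub_distrib]
  exact Fintype.sum_eq_add a b hab fun i hi => sub_eq_zero.2 (h i hi.1 hi.2)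

lemma inner_signedSwap_left {a b : Fin n} (hab : a ≠ b) (ε : ℝ) (u v : EuclideanSpace ℝ (Fin n)) :
    ⟪signedSwap a b ε u, v⟫ = ⟪u, signedSwap a b ε v⟫ := by
  rw [← sub_eq_zero]
  simp only [PiLp.inner_apply, RCLike.inner_apply, conj_trivial]
  rw [sum_sub_sum_of_eq_off_pair hab fun i hia hib => by simp [signedSwap, hia, hib]]
  simp [signedSwap, hab.symm]
  ring

lemma inner_sD_left (hn : 2 ≤ n) {j : ℕ} (hj : 1 ≤ j) (hjn : j ≤ n)
    (u v : EuclideanSpace ℝ (Fin n)) : ⟪sD n j u, v⟫ = ⟪u, sD n j v⟫ := by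
  rcases hjn.lt_or_eq with hlt | rfl
  · rw [sD_eq_signedSwap_of_lt hj hlt]
    exact inner_signedSwap_left (by simp [Fin.ext_iff]; omega) _ u v
  · rw [sD_self_eq_signedSwap hn]
    exact inner_signedSwap_left (by simp [Fin.ext_iff]; omega) _ u v

lemma compD_cons (j : ℕ) (l : List ℕ) (x : EuclideanSpace ℝ (Fin n)) :
    compD n (j :: l) x = sD n j (compD n l x) := rfl

lemma compD_append (l₁ l₂ : List ℕ) (x : EuclideanSpace ℝ (Fin n)) :
    compD n (l₁ ++ l₂) x = compD n l₁ (compD n l₂ x) := by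
  induction l₁ with
  | nil => rfl
  | cons j l ih => exact congrArg (sD n j) ih

lemma inner_compD_left (hn : 2 ≤ n) {l : List ℕ} (hl : ∀ m ∈ l, 1 ≤ m ∧ m ≤ n)
    (u v : EuclideanSpace ℝ (Fin n)) : ⟪compD n l u, v⟫ = ⟪u, compD n l.reverse v⟫ := by
  induction l generalizing v with
  | nil => rfl
  | cons j l ih =>
    obtain ⟨hj, hjn⟩ := hl j List.mem_cons_self
    rw [compD_cons, inner_sD_left hn hj hjn, ih (fun m hm => hl m (List.mem_cons_of_mem j hm)),
      List.reverse_cons, compD_append]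
    rfl

def IsHalfSigned (x : EuclideanSpace ℝ (Fin n)) : Prop :=
  ∀ i, |x i| = 1 / 2

lemma IsHalfSigned.signedSwap {x : EuclideanSpace ℝ (Fin n)} (hx : IsHalfSigned x) (a b : Fin n)
    {ε : ℝ} (hε : |ε| = 1) : IsHalfSigned (signedSwap a b ε x) := by
  intro i
  simp only [_root_.signedSwap, PiLp.toLp_apply]
  split_ifs <;> (try rw [abs_mul, hε, one_mul]) <;> exact hx _

lemma IsHalfSigned.sD {x : EuclideanSpace ℝ (Fin n)} (hx : IsHalfSigned x) (hn : 2 ≤ n) {j : ℕ}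
    (hj : 1 ≤ j) (hjn : j ≤ n) : IsHalfSigned (sD n j x) := by
  rcases hjn.lt_or_eq with hlt | rfl
  · rw [sD_eq_signedSwap_of_lt hj hlt]
    exact hx.signedSwap _ _ (by simp)
  · rw [sD_self_eq_signedSwap hn]
    exact hx.signedSwap _ _ (by simp)

lemma IsHalfSigned.compD {x : EuclideanSpace ℝ (Fin n)} (hx : IsHalfSigned x) (hn : 2 ≤ n)
    {l : List ℕ} (hl : ∀ m ∈ l, 1 ≤ m ∧ m ≤ n) : IsHalfSigned (compD n l x) := by
  induction l with
  | nil => exact hx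
  | cons j l ih =>
    obtain ⟨hj, hjn⟩ := hl j List.mem_cons_self
    exact (ih fun m hm => hl m (List.mem_cons_of_mem j hm)).sD hn hj hjn

lemma wtD_self_apply (i : Fin n) : wtD n n i = 1 / 2 := by
  simp [wtD]

lemma isHalfSigned_wtD_self : IsHalfSigned (wtD n n) := by
  intro i
  rw [wtD_self_apply]
  norm_num

noncomputable def height (x : EuclideanSpace ℝ (Fin n)) : ℤ :=
  ∑ i, if x i < 0 then (n : ℤ) - 1 - i else 0

lemma height_signedSwap_sub {a b : Fin n} (hab : a ≠ b) (ε : ℝ) (x : EuclideanSpace ℝ (Fin n)) :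
    height (signedSwap a b ε x) - height x =
      ((if ε * x b < 0 then (n : ℤ) - 1 - a else 0) - if x a < 0 then (n : ℤ) - 1 - a else 0) +
      ((if ε * x a < 0 then (n : ℤ) - 1 - b else 0) - if x b < 0 then (n : ℤ) - 1 - b else 0) := by
  rw [height, height, sum_sub_sum_of_eq_off_pair hab fun i hia hib => by
    simp [signedSwap, hia, hib]]
  simp [signedSwap, hab.symm]

lemma height_sD_le (hn : 2 ≤ n) {j : ℕ} (hj : 1 ≤ j) (hjn : j ≤ n) (x : EuclideanSpace ℝ (Fin n)) :
    height (sD n j x) ≤ height x + 1 := by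
  rcases hjn.lt_or_eq with hlt | rfl
  · have h := height_signedSwap_sub (a := ⟨j - 1, by omega⟩) (b := ⟨j, hlt⟩)
      (by simp [Fin.ext_iff]; omega) 1 x
    rw [← sD_eq_signedSwap_of_lt hj hlt] at h
    simp only [one_mul] at h
    split_ifs at h <;> push_cast [Nat.cast_sub (by omega : 1 ≤ j)] at h <;> linarith
  · have h := height_signedSwap_sub (a := ⟨j - 2, by omega⟩) (b := ⟨j - 1, by omega⟩)
      (by simp [Fin.ext_iff]; omega) (-1) x
    rw [← sD_self_eq_signedSwap hn] at h
    split_ifs at h <;> push_cast [Nat.cast_sub hn, Nat.cast_sub hj] at h <;> linarith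

lemma height_compD_le (hn : 2 ≤ n) {l : List ℕ} (hl : ∀ m ∈ l, 1 ≤ m ∧ m ≤ n)
    (x : EuclideanSpace ℝ (Fin n)) : height (compD n l x) ≤ height x + l.length := by
  induction l with
  | nil => simp [compD]
  | cons j l ih =>
    obtain ⟨hj, hjn⟩ := hl j List.mem_cons_self
    have := height_sD_le hn hj hjn (compD n l x)
    have := ih fun m hm => hl m (List.mem_cons_of_mem j hm)
    rw [compD_cons, List.length_cons]
    push_cast
    linarith

lemma height_wtD_self : height (wtD n n) = 0 := by
  simp [height, wtD_self_apply]

noncomputable def negBelow (p : ℕ) (x : EuclideanSpace ℝ (Fin n)) : Finset (Fin n) :=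
  {i | (i : ℕ) < p ∧ x i < 0}

lemma sum_lt_eq_of_isHalfSigned {x : EuclideanSpace ℝ (Fin n)} (hx : IsHalfSigned x) {p : ℕ}
    (hp : p ≤ n) : ∑ i : Fin n, (if (i : ℕ) < p then x i else 0) = p / 2 - #(negBelow p x) := by
  have hpoint : ∀ i : Fin n, (if (i : ℕ) < p then x i else 0) =
      (if (i : ℕ) < p then 1 / 2 else 0) - if i ∈ negBelow p x then 1 else 0 := by
    intro i
    rcases (abs_eq (by norm_num)).1 (hx i) with h | h <;>
      by_cases hi : (i : ℕ) < p <;> simp [negBelow, h, hi] <;> norm_num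
  rw [Finset.sum_congr rfl fun i _ => hpoint i, Finset.sum_sub_distrib, Finset.sum_boole,
    ← Finset.sum_filter, Finset.sum_const, Fin.card_filter_val_lt, min_eq_right hp, nsmul_eq_mul,
    Finset.filter_mem_eq_inter, Finset.univ_inter]
  ring

lemma sum_negBelow_le_height (p : ℕ) (x : EuclideanSpace ℝ (Fin n)) :
    ∑ i ∈ negBelow p x, ((n : ℤ) - 1 - i) ≤ height x := by
  rw [height, ← Finset.sum_filter]
  refine Finset.sum_le_sum_of_subset_of_nonneg (fun i hi => ?_) fun i _ _ => ?_
  · simp only [negBelow, Finset.mem_filter, Finset.mem_univ, true_and] at hi ⊢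
    exact hi.2
  · have := i.isLt
    omega

lemma card_mul_card_add_one_le_two_mul_sum {s : Finset ℤ} (hs : ∀ x ∈ s, 1 ≤ x) :
    (#s : ℤ) * (#s + 1) ≤ 2 * ∑ x ∈ s, x := by
  have gauss : ∀ c : ℕ, 2 * ∑ k ∈ range c, (1 + (k : ℤ)) = c * (c + 1) := by
    intro c
    induction c with
    | zero => simp
    | succ c ih => rw [Finset.sum_range_succ, mul_add, ih]; push_cast; ring
  have := Finset.sum_range_le_sum hs
  linarith [gauss #s]


lemma inner_wtD_of_add_two_le {k : ℕ} (hk : k + 2 ≤ n) (x : EuclideanSpace ℝ (Fin n)) :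
    ⟪wtD n k, x⟫ = ∑ i : Fin n, if (i : ℕ) < k then x i else 0 := by
  simp only [PiLp.inner_apply, RCLike.inner_apply, conj_trivial, wtD,
    if_neg (show k + 1 ≠ n by omega), if_neg (show k ≠ n by omega)]
  refine Finset.sum_congr rfl fun i _ => ?_
  split_ifs <;> simp

lemma sub_one_le_height_of_inner_wtD_neg {k : ℕ} (hk : k + 2 ≤ n) {x : EuclideanSpace ℝ (Fin n)}
    (hx : IsHalfSigned x) (hneg : ⟪wtD n k, x⟫ < 0) : (n : ℤ) - 1 ≤ height x := by
  set c := #(negBelow k x)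
  rw [inner_wtD_of_add_two_le hk, sum_lt_eq_of_isHalfSigned hx (by omega)] at hneg
  have hck : (k : ℤ) < 2 * c := by
    have : (k : ℝ) < 2 * c := by linarith
    exact_mod_cast this
  have hheight : ((n : ℤ) - k) * c ≤ height x :=
    calc ((n : ℤ) - k) * c = c • ((n : ℤ) - k) := by rw [nsmul_eq_mul, mul_comm]
      _ ≤ ∑ i ∈ negBelow k x, ((n : ℤ) - 1 - i) :=
        Finset.card_nsmul_le_sum _ _ _ fun i hi => by
          simp only [negBelow, Finset.mem_filter, Finset.mem_univ, true_and] at hi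
          omega
      _ ≤ height x := sum_negBelow_le_height k x
  have hc : (1 : ℤ) ≤ c := by omega
  nlinarith [mul_nonneg (show (0 : ℤ) ≤ n - k - 2 by omega) (show (0 : ℤ) ≤ c - 1 by omega)]

lemma inner_wtD_ge_of_le_succ {k : ℕ} (hk : n ≤ k + 1) (hkn : k ≤ n) {x : EuclideanSpace ℝ (Fin n)}
    (hx : IsHalfSigned x) :
    (∑ i : Fin n, if (i : ℕ) < n - 1 then x i else 0) / 2 - 1 / 4 ≤ ⟪wtD n k, x⟫ := by
  cases n with
  | zero => simp [PiLp.inner_apply]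
  | succ m =>
    have hlast : -(1 / 4 : ℝ) ≤ wtD (m + 1) k (Fin.last m) * x (Fin.last m) := by
      have habs : |wtD (m + 1) k (Fin.last m)| = 1 / 2 := by
        rcases hkn.lt_or_eq with h | rfl
        · simp [wtD, show k + 1 = m + 1 by omega]
        · simp [wtD]
      have := neg_abs_le (wtD (m + 1) k (Fin.last m) * x (Fin.last m))
      rw [abs_mul, habs, hx] at this
      linarith
    have hinit : ∀ i : Fin m, wtD (m + 1) k (Fin.castSucc i) = 1 / 2 := by
      intro i
      have := i.isLt
      rcases hkn.lt_or_eq with h | rfl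
      · simp [wtD, show k + 1 = m + 1 by omega, show (i : ℕ) ≠ m by omega]
      · simp [wtD]
    simp only [PiLp.inner_apply, RCLike.inner_apply, conj_trivial, Fin.sum_univ_castSucc, hinit]
    simp only [Fin.val_castSucc, add_tsub_cancel_right, Fin.is_lt, ↓reduceIte, Fin.val_last,
      lt_self_iff_false, add_zero, div_eq_mul_inv, one_mul, Finset.sum_mul]
    linarith [mul_comm (x (Fin.last m)) (wtD (m + 1) k (Fin.last m))]

lemma mul_le_two_mul_height_of_inner_wtD_neg {k : ℕ} (hk : n ≤ k + 1) (hkn : k ≤ n)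
    {x : EuclideanSpace ℝ (Fin n)} (hx : IsHalfSigned x) (hneg : ⟪wtD n k, x⟫ < 0) :
    ((n / 2 * (n / 2 + 1) : ℕ) : ℤ) ≤ 2 * height x := by
  set c := #(negBelow (n - 1) x)
  have hsum := inner_wtD_ge_of_le_succ hk hkn hx
  rw [sum_lt_eq_of_isHalfSigned hx (Nat.sub_le n 1)] at hsum
  have hc : n / 2 ≤ c := by
    have : ((n - 1 : ℕ) : ℝ) < 2 * c + 1 := by linarith
    have : n - 1 < 2 * c + 1 := by exact_mod_cast this
    omega
  have himage : ∀ t ∈ (negBelow (n - 1) x).image fun i : Fin n => (n : ℤ) - 1 - i, 1 ≤ t := by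
    simp only [Finset.mem_image, negBelow, Finset.mem_filter, Finset.mem_univ, true_and]
    rintro t ⟨i, hi, rfl⟩
    omega
  have hinj : Set.InjOn (fun i : Fin n => (n : ℤ) - 1 - i) (negBelow (n - 1) x) :=
    fun i _ j _ h => Fin.ext (by simpa using h)
  have hgauss := card_mul_card_add_one_le_two_mul_sum himage
  rw [Finset.card_image_of_injOn hinj, Finset.sum_image hinj] at hgauss
  have := sum_negBelow_le_height (n - 1) x
  have : n / 2 * (n / 2 + 1) ≤ c * (c + 1) := Nat.mul_le_mul hc (by omega)
  have : ((n / 2 * (n / 2 + 1) : ℕ) : ℤ) ≤ c * (c + 1) := by exact_mod_cast this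
  linarith

lemma wtD_one (hn : 3 ≤ n) : wtD n 1 = EuclideanSpace.single ⟨0, by omega⟩ 1 := by
  ext i
  simp [wtD, show 1 + 1 ≠ n by omega, show 1 ≠ n by omega, Fin.ext_iff]

lemma sD_single_of_lt {j : ℕ} (hj : 1 ≤ j) (hjn : j < n) :
    sD n j (EuclideanSpace.single ⟨j - 1, by omega⟩ 1) = EuclideanSpace.single ⟨j, hjn⟩ 1 := by
  rw [sD_eq_signedSwap_of_lt hj hjn]
  ext i
  simp only [signedSwap, PiLp.toLp_apply, PiLp.single_apply, Fin.ext_iff]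
  split_ifs <;> first | rfl | omega | simp

lemma compD_range_single {j : ℕ} (hj : j < n) :
    compD n ((List.range j).map fun i => j - i) (EuclideanSpace.single ⟨0, by omega⟩ 1) =
      EuclideanSpace.single ⟨j, hj⟩ 1 := by
  induction j with
  | zero => rfl
  | succ j ih =>
    have hlist : (List.range (j + 1)).map (fun i => j + 1 - i) =
        (j + 1) :: (List.range j).map fun i => j - i := by
      simp [List.range_succ_eq_map]
    rw [hlist, compD_cons, ih (by omega)]
    exact sD_single_of_lt (by omega) hj

lemma sD_self_single (hn : 2 ≤ n) :
    sD n n (EuclideanSpace.single ⟨n - 2, by omega⟩ 1) = negEnD n := by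
  rw [sD_self_eq_signedSwap hn]
  ext i
  simp only [signedSwap, negEnD, PiLp.toLp_apply, PiLp.single_apply, Fin.ext_iff]
  split_ifs <;> first | rfl | omega | simp

lemma negEnD_eq_neg_single (hn : 1 ≤ n) :
    negEnD n = -EuclideanSpace.single ⟨n - 1, by omega⟩ 1 := by
  ext i
  simp only [negEnD, PiLp.toLp_apply, PiLp.neg_apply, PiLp.single_apply, Fin.ext_iff]
  split_ifs <;> first | rfl | omega | simp

lemma inner_negEnD_wtD_self (hn : 1 ≤ n) : ⟪negEnD n, wtD n n⟫ = -(1 / 2) := by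
  rw [negEnD_eq_neg_single hn, inner_neg_left, EuclideanSpace.inner_single_left, wtD_self_apply]
  simp

lemma compD_witness_eq_negEnD (hn : 3 ≤ n) :
    compD n (n :: (List.range (n - 2)).map fun i => n - 2 - i) (wtD n 1) = negEnD n := by
  rw [compD_cons, wtD_one hn, compD_range_single (by omega), sD_self_single (by omega)]

lemma le_length_of_inner_compD_neg (hn : 2 ≤ n) {k : ℕ} (hkn : k ≤ n) {l : List ℕ}
    (hl : ∀ m ∈ l, 1 ≤ m ∧ m ≤ n) (hneg : ⟪compD n l (wtD n k), wtD n n⟫ < 0) :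
    n - 1 ≤ l.length ∨ n / 2 * (n / 2 + 1) ≤ 2 * l.length := by
  have hrev : ∀ m ∈ l.reverse, 1 ≤ m ∧ m ≤ n := fun m hm => hl m (List.mem_reverse.1 hm)
  rw [inner_compD_left hn hl] at hneg
  have hx := isHalfSigned_wtD_self.compD hn hrev
  have hheight := height_compD_le hn hrev (wtD n n)
  rw [height_wtD_self, List.length_reverse] at hheight
  by_cases hk : k + 2 ≤ n
  · have := sub_one_le_height_of_inner_wtD_neg hk hx hneg
    omega
  · have := mul_le_two_mul_height_of_inner_wtD_neg (by omega) hkn hx hneg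
    omega

lemma sub_one_le_of_mul_le {n L : ℕ} (hn : 4 ≤ n) (h5 : n ≠ 5)
    (h : n / 2 * (n / 2 + 1) ≤ 2 * L) : n - 1 ≤ L := by
  obtain hm | hm : n / 2 = 2 ∨ 3 ≤ n / 2 := by omega
  · rw [hm] at h
    omega
  · have : 4 * (n / 2) ≤ n / 2 * (n / 2 + 1) := by nlinarith
    omega

lemma inner_compD_five_witness_neg : ⟪compD 5 [5, 3, 4] (wtD 5 4), wtD 5 5⟫ < 0 := by
  simp only [PiLp.inner_apply, RCLike.inner_apply, conj_trivial, Fin.sum_univ_five]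
  norm_num [compD, sD, wtD]

end

theorem statement16 (n : ℕ) (hn : 4 ≤ n) :
    (n ≠ 5 →
      (∀ k, 1 ≤ k → k ≤ n → ∀ l : List ℕ, (∀ m ∈ l, 1 ≤ m ∧ m ≤ n) →
          ⟪compD n l (wtD n k), wtD n n⟫ < 0 → n - 1 ≤ l.length) ∧
      IsLeast {k : ℕ | ∃ l : List ℕ, (∀ m ∈ l, 1 ≤ m ∧ m ≤ n) ∧ l.length = k ∧
          ⟪compD n l (wtD n 1), wtD n n⟫ < 0} (n - 1) ∧
      ⟪compD n (n :: ((List.range (n - 2)).map (fun i => n - 2 - i))) (wtD n 1),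
        wtD n n⟫ < 0 ∧
      compD n (n :: ((List.range (n - 2)).map (fun i => n - 2 - i))) (wtD n 1) =
        negEnD n) ∧
    (n = 5 →
      (∀ k, 1 ≤ k → k ≤ 5 → ∀ l : List ℕ, (∀ m ∈ l, 1 ≤ m ∧ m ≤ 5) →
          ⟪compD n l (wtD n k), wtD n 5⟫ < 0 → 3 ≤ l.length) ∧
      IsLeast {k : ℕ | ∃ l : List ℕ, (∀ m ∈ l, 1 ≤ m ∧ m ≤ 5) ∧ l.length = k ∧
          ⟪compD n l (wtD n 4), wtD n 5⟫ < 0} 3 ∧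
      ⟪compD n [5, 3, 4] (wtD n 4), wtD n 5⟫ < 0) := by
  have hword := compD_witness_eq_negEnD (by omega : 3 ≤ n)
  have hinner : ⟪compD n (n :: ((List.range (n - 2)).map (fun i => n - 2 - i))) (wtD n 1),
      wtD n n⟫ < 0 := by
    rw [hword, inner_negEnD_wtD_self (by omega)]
    norm_num
  refine ⟨fun h5 => ?_, fun h5 => ?_⟩
  · have hbound : ∀ k, k ≤ n → ∀ l : List ℕ, (∀ m ∈ l, 1 ≤ m ∧ m ≤ n) →
        ⟪compD n l (wtD n k), wtD n n⟫ < 0 → n - 1 ≤ l.length := fun k hkn l hl hneg =>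
      (le_length_of_inner_compD_neg (by omega) hkn hl hneg).elim id (sub_one_le_of_mul_le hn h5)
    refine ⟨fun k _ hkn => hbound k hkn, ⟨⟨_, ?_, ?_, hinner⟩, ?_⟩, hinner, hword⟩
    · simp only [List.mem_cons, List.mem_map, List.mem_range]
      rintro m (rfl | ⟨i, hi, rfl⟩) <;> omega
    · simp only [List.length_cons, List.length_map, List.length_range]
      omega
    · rintro L ⟨l, hl, rfl, hneg⟩
      exact hbound 1 (by omega) l hl hneg
  · subst h5
    have hbound : ∀ k, k ≤ 5 → ∀ l : List ℕ, (∀ m ∈ l, 1 ≤ m ∧ m ≤ 5) →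
        ⟪compD 5 l (wtD 5 k), wtD 5 5⟫ < 0 → 3 ≤ l.length := fun k hkn l hl hneg => by
      have := le_length_of_inner_compD_neg (by omega) hkn hl hneg
      omega
    refine ⟨fun k _ hkn => hbound k hkn,
      ⟨⟨[5, 3, 4], by simp, rfl, inner_compD_five_witness_neg⟩, ?_⟩, inner_compD_five_witness_neg⟩
    rintro L ⟨l, hl, rfl, hneg⟩
    exact hbound 4 (by omega) l hl hneg
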